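/- In the setting of the hyperelliptic residue data, assume additionally g ≥ 2 and let i ≠ j be indices in {1,…,g}. Then Σ_{n=1}^N A12_n/((u_n − q_j)(u_n − q_i)) = w_j·∏_{β≠j}(q_j − q_β)/(q_i − q_j) + w_i·∏_{β≠i}(q_i − q_β)/(q_j − q_i). -/

import Mathlib

/-!
The residues have a polynomial numerator: `A12_n = F(u_n) / ∏_{m≠n} (u_n − u_m)` with
`F(x) = Σ_k (1 + α_k (x − q_k)) ∏_{β≠k} (x − q_β)² / (w_k ∏_{β≠k} (q_k − q_β))` of degree
`< 2g`. Lagrange interpolation on the `N + 2` nodes `z ∈ {u_1, …, u_N, q_i, q_j}` writes the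
coefficient of `x^{N+1}` in `F`, which vanishes, as `Σ_z F(z) / ∏_{z'≠z} (z − z')`. At `q_k`
only the `k`-th summand of `F` survives, so `F(q_k) = ∏_{β≠k} (q_k − q_β) / w_k`, and
`w_k² ∏_m (q_k − u_m) = 1` turns the two extra node terms into the right-hand side.
-/

open Finset

/-- The residue `A12^{(n)}` of the function `A₁₂(u)` associated with the differential `Ω`
on the hyperelliptic curve `v² = ∏_{m=1}^N (u − u_m)`, as an explicit rational expression:
`A12_n = [Σ_j (1/(u_n−q_j) + α_j)·∏_{β≠j}(u_n−q_β)/(w_j·∏_{β≠j}(q_j−q_β))]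
          · ∏_β (u_n−q_β) / ∏_{m≠n}(u_n−u_m)`. -/
noncomputable def A12res {g N : ℕ} (u : Fin N → ℂ) (q w a : Fin g → ℂ) (n : Fin N) : ℂ :=
  (∑ j, (1 / (u n - q j) + a j) * (∏ β ∈ univ.erase j, (u n - q β)) /
      (w j * ∏ β ∈ univ.erase j, (q j - q β))) *
    (∏ β, (u n - q β)) / ∏ m ∈ univ.erase n, (u n - u m)

/-- The value `Ω_∞ = Ω(P_∞) = −2·Σ_j α_j/(w_j·∏_{β≠j}(q_j−q_β))`. -/
noncomputable def OmegaInfty {g : ℕ} (q w a : Fin g → ℂ) : ℂ :=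
  -2 * ∑ j, a j / (w j * ∏ β ∈ univ.erase j, (q j - q β))

/-- The coefficient
`β_n = A12_n·(Σ_j 1/(w_j·(u_n−q_j)·∏_{β≠j}(q_j−q_β)) − Ω_∞/2)`. -/
noncomputable def betaCoef {g N : ℕ} (u : Fin N → ℂ) (q w a : Fin g → ℂ) (n : Fin N) : ℂ :=
  A12res u q w a n *
    ((∑ j, 1 / (w j * (u n - q j) * ∏ β ∈ univ.erase j, (q j - q β))) -
      OmegaInfty q w a / 2)

open Polynomial Function

section Nodes

variable {K : Type*} [Field K]

theorem sum_insert_div_prod_erase_sub [DecidableEq K] (f : K → K) {s : Finset K} {x : K}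
    (hx : x ∉ s) :
    ∑ z ∈ insert x s, f z / ∏ t ∈ (insert x s).erase z, (z - t) =
      f x / ∏ t ∈ s, (x - t) + ∑ z ∈ s, f z / (z - x) / ∏ t ∈ s.erase z, (z - t) := by
  rw [sum_insert hx, erase_insert hx]
  congr 1
  refine sum_congr rfl fun z hz => ?_
  rw [erase_insert_of_ne (ne_of_mem_of_not_mem hz hx).symm,
    prod_insert fun h => hx (mem_of_mem_erase h), div_div]

theorem coeff_eq_sum_div_prod_sub_of_two_extra_nodes {ι : Type*} [Fintype ι] [DecidableEq ι]
    {v : ι → K} (hv : Injective v) {x y : K} (hx : ∀ n, x ≠ v n) (hy : ∀ n, y ≠ v n)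
    (hxy : x ≠ y) {P : K[X]} (hP : P.degree < Fintype.card ι + 2) :
    P.coeff (Fintype.card ι + 1) =
      P.eval x / (x - y) / ∏ n, (x - v n) + P.eval y / (y - x) / ∏ n, (y - v n) +
        ∑ n, P.eval (v n) / (v n - x) / (v n - y) / ∏ m ∈ univ.erase n, (v n - v m) := by
  classical
  set s := univ.image v
  have hxs : x ∉ s := by simpa [s] using fun n => (hx n).symm
  have hys : y ∉ s := by simpa [s] using fun n => (hy n).symm
  have hxys : x ∉ insert y s := by simp [hxy, hxs]
  have hcard : #(insert x (insert y s)) = Fintype.card ι + 2 := by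
    rw [card_insert_of_notMem hxys, card_insert_of_notMem hys,
      card_image_of_injective _ hv, card_univ]
  have key := Lagrange.coeff_eq_sum (s := insert x (insert y s)) (v := id) (Set.injOn_id _)
    (by rw [hcard]; exact_mod_cast hP)
  simp only [id] at key
  rw [hcard, sum_insert_div_prod_erase_sub _ hxys, sum_insert_div_prod_erase_sub _ hys,
    prod_insert hys, ← div_div, sum_image hv.injOn, prod_image hv.injOn,
    prod_image hv.injOn, ← add_assoc] at key
  rw [show Fintype.card ι + 1 = Fintype.card ι + 2 - 1 by omega, key]
  congr 1
  refine sum_congr rfl fun n _ => ?_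
  rw [← image_erase hv, prod_image hv.injOn]

end Nodes

section Numerator

variable {K : Type*} [Field K] {κ : Type*} [Fintype κ] [DecidableEq κ]

noncomputable def A12numerator (q w a : κ → K) : K[X] :=
  ∑ k, C (w k * ∏ β ∈ univ.erase k, (q k - q β))⁻¹ *
    ((1 + C (a k) * (X - C (q k))) * Lagrange.nodal (univ.erase k) q ^ 2)

variable (q w a : κ → K)

theorem eval_A12numerator (x : K) :
    (A12numerator q w a).eval x =
      ∑ k, (1 + a k * (x - q k)) * (∏ β ∈ univ.erase k, (x - q β)) ^ 2 /
        (w k * ∏ β ∈ univ.erase k, (q k - q β)) := by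
  simp only [A12numerator, eval_finsetSum, eval_mul, eval_C, eval_add, eval_one, eval_sub,
    eval_X, eval_pow, Lagrange.eval_nodal]
  exact sum_congr rfl fun k _ => by ring

theorem degree_A12numerator_lt : (A12numerator q w a).degree < 2 * Fintype.card κ := by
  refine (degree_sum_le _ _).trans_lt <|
    (Finset.sup_lt_iff (WithBot.bot_lt_coe _)).2 fun k _ => ?_
  have hcard : 0 < Fintype.card κ := Fintype.card_pos_iff.2 ⟨k⟩
  have hlin : (1 + C (a k) * (X - C (q k))).natDegree ≤ 1 := by compute_degree
  have hnodal : (Lagrange.nodal (univ.erase k) q ^ 2).natDegree = 2 * (Fintype.card κ - 1) := by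
    rw [natDegree_pow, Lagrange.natDegree_nodal, card_erase_of_mem (mem_univ k), card_univ]
  refine degree_le_natDegree.trans_lt ?_
  exact_mod_cast (natDegree_C_mul_le _ _).trans_lt <| natDegree_mul_le.trans_lt (by omega)

theorem eval_A12numerator_node (hq : Injective q) (k : κ) :
    (A12numerator q w a).eval (q k) = (∏ β ∈ univ.erase k, (q k - q β)) / w k := by
  have hD : ∏ β ∈ univ.erase k, (q k - q β) ≠ 0 :=
    prod_ne_zero_iff.2 fun β hβ => sub_ne_zero.2 <| hq.ne (ne_of_mem_erase hβ).symm
  rw [eval_A12numerator, sum_eq_single k]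
  · field_simp
    ring
  · intro l _ hlk
    rw [prod_eq_zero (mem_erase.2 ⟨hlk.symm, mem_univ k⟩) (sub_self _)]
    ring
  · simp

end Numerator

theorem A12res_eq_eval_A12numerator_div {g N : ℕ} (u : Fin N → ℂ) (q w a : Fin g → ℂ) (n : Fin N)
    (hqu : ∀ k, u n ≠ q k) :
    A12res u q w a n = (A12numerator q w a).eval (u n) / ∏ m ∈ univ.erase n, (u n - u m) := by
  rw [A12res, eval_A12numerator, sum_mul]
  congr 1
  refine sum_congr rfl fun k _ => ?_
  have huq : u n - q k ≠ 0 := sub_ne_zero.2 (hqu k)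
  rw [← mul_prod_erase _ _ (mem_univ k)]
  field_simp

theorem sum_A12_double_pole_mixed_general {g N : ℕ} (hN : N = 2 * g + 1)
    (u : Fin N → ℂ) (q w a : Fin g → ℂ)
    (hu : ∀ m n : Fin N, m ≠ n → u m ≠ u n)
    (hq : ∀ i j : Fin g, i ≠ j → q i ≠ q j)
    (hqu : ∀ (j : Fin g) (n : Fin N), q j ≠ u n)
    (hw : ∀ j, (w j) ^ 2 * ∏ m, (q j - u m) = 1)
    (i j : Fin g) (hij : i ≠ j) :
    ∑ n, A12res u q w a n / ((u n - q j) * (u n - q i)) =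
      w j * (∏ β ∈ univ.erase j, (q j - q β)) / (q i - q j) +
        w i * (∏ β ∈ univ.erase i, (q i - q β)) / (q j - q i) := by
  have hu' : Injective u := fun m n h => by_contra fun hmn => hu m n hmn h
  have hq' : Injective q := fun k l h => by_contra fun hkl => hq k l hkl h
  have hdeg : (A12numerator q w a).degree < ↑(Fintype.card (Fin N) + 1) := by
    refine (degree_A12numerator_lt q w a).trans_le ?_
    simp only [Fintype.card_fin, hN]
    exact_mod_cast (by omega : 2 * g ≤ 2 * g + 1 + 1)
  have hcoeff := coeff_eq_sum_div_prod_sub_of_two_extra_nodes hu' (hqu j) (hqu i)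
    (hq j i hij.symm) (hdeg.trans (by exact_mod_cast Nat.lt_succ_self _))
  have hnode (k : Fin g) : (A12numerator q w a).eval (q k) / ∏ m, (q k - u m) =
      w k * ∏ β ∈ univ.erase k, (q k - q β) := by
    have hw0 : w k ≠ 0 := by rintro h; simpa [h] using hw k
    rw [eval_A12numerator_node q w a hq', eq_inv_of_mul_eq_one_right (hw k)]
    field_simp
  have hterm (n : Fin N) : (A12numerator q w a).eval (u n) / (u n - q j) / (u n - q i) /
      ∏ m ∈ univ.erase n, (u n - u m) = A12res u q w a n / ((u n - q j) * (u n - q i)) := by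
    rw [A12res_eq_eval_A12numerator_div u q w a n fun k => (hqu k n).symm]
    simp only [div_eq_mul_inv, mul_inv]
    ring
  rw [coeff_eq_zero_of_degree_lt hdeg, div_right_comm, hnode, div_right_comm _ (q i - q j), hnode,
    sum_congr rfl fun n _ => hterm n] at hcoeff
  rw [← neg_sub (q i) (q j), div_neg] at hcoeff ⊢
  linear_combination -hcoeff

/-- In the setting of the hyperelliptic residue data (with `g ≥ 2` and `i ≠ j`),
`Σ_n A12_n/((u_n − q_j)(u_n − q_i))
  = w_j·∏_{β≠j}(q_j − q_β)/(q_i − q_j) + w_i·∏_{β≠i}(q_i − q_β)/(q_j − q_i)`. -/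
theorem sum_A12_double_pole_mixed {g N : ℕ} (hg : 2 ≤ g) (hN : N = 2 * g + 1)
    (u : Fin N → ℂ) (q w a : Fin g → ℂ)
    (hu : ∀ m n : Fin N, m ≠ n → u m ≠ u n)
    (hq : ∀ i j : Fin g, i ≠ j → q i ≠ q j)
    (hqu : ∀ (j : Fin g) (n : Fin N), q j ≠ u n)
    (hw : ∀ j, (w j) ^ 2 * ∏ m, (q j - u m) = 1)
    (i j : Fin g) (hij : i ≠ j) :
    ∑ n, A12res u q w a n / ((u n - q j) * (u n - q i)) =
      w j * (∏ β ∈ univ.erase j, (q j - q β)) / (q i - q j) +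
        w i * (∏ β ∈ univ.erase i, (q i - q β)) / (q j - q i) :=
  sum_A12_double_pole_mixed_general hN u q w a hu hq hqu hw i j hij
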